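/- arXiv:2109.10096 — 3 statements merged into one kernel-verified Lean document; each statement's English description precedes it below -/
import Mathlib

section
/- Let Δ ∈ ℝ^{n×n} be symmetric with orthonormal eigenbasis x¹,…,xⁿ ∈ ℝⁿ and corresponding eigenvalues λ¹,…,λⁿ, and let A = nΔ. Then for every i = 1,…,n one has T_{W_A}(√n·ψ_{xⁱ}) = λⁱ·(√n·ψ_{xⁱ}), the functions √n·ψ_{x¹},…,√n·ψ_{xⁿ} are orthonormal in L²[0,1], and every f ∈ L²[0,1] that is orthogonal to all of them satisfies T_{W_A} f = 0. In particular, the nonzero spectrum of T_{W_A} consists exactly of the nonzero eigenvalues of Δ. -/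
open MeasureTheory Filter

noncomputable section

/-- Lebesgue measure restricted to `[0,1]`. -/
abbrev μ01 : Measure ℝ := volume.restrict (Set.Icc 0 1)

instance : IsFiniteMeasure μ01 := by
  constructor
  rw [Measure.restrict_apply_univ, Real.volume_Icc]
  exact ENNReal.ofReal_lt_top

/-- The space `L²[0,1]` (complex valued). -/
abbrev L2 := Lp ℂ 2 μ01

/-- The `j`-th interval `P_j = [j/n, (j+1)/n)` of the standard partition of `[0,1]`
(0-indexed version of `[(j-1)/n, j/n)`). -/
def part (n : ℕ) (j : Fin n) : Set ℝ := Set.Ico ((j : ℝ) / n) (((j : ℝ) + 1) / n)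

lemma part_meas (n : ℕ) (j : Fin n) : MeasurableSet (part n j) := measurableSet_Ico

lemma part_ne_top (n : ℕ) (j : Fin n) : μ01 (part n j) ≠ ⊤ := (measure_lt_top _ _).ne

/-- The graphon `W_B` induced by an `n × n` matrix `B`:
`W_B(u,v) = ∑_{i,j} B i j · 1_{P_i}(u) · 1_{P_j}(v)`. -/
def inducedGraphon {n : ℕ} (B : Matrix (Fin n) (Fin n) ℝ) : ℝ → ℝ → ℝ :=
  fun u v => ∑ i, ∑ j, B i j * (part n i).indicator 1 u * (part n j).indicator 1 v

/-- The graphon signal `ψ_x = ∑_j x_j · 1_{P_j} ∈ L²[0,1]` induced by `x ∈ ℂⁿ`. -/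
def inducedSignal {n : ℕ} (x : Fin n → ℂ) : L2 :=
  ∑ j, indicatorConstLp 2 (part_meas n j) (part_ne_top n j) (x j)

/-- `W` is a graphon: bounded, symmetric and measurable `[0,1]² → ℝ`
(realized as a function on all of `ℝ²`; only its values matter w.r.t. `μ01`). -/
structure IsGraphon (W : ℝ → ℝ → ℝ) : Prop where
  symm : ∀ u v, W u v = W v u
  meas : Measurable (Function.uncurry W)
  bdd : ∃ C, ∀ u v, |W u v| ≤ C

/-- `T` is the graphon shift operator of `W`: `(T f)(v) = ∫₀¹ W(v,u) f(u) du`. -/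
def IsGRSO (W : ℝ → ℝ → ℝ) (T : L2 →L[ℂ] L2) : Prop :=
  ∀ f : L2, ∀ᵐ v ∂μ01, T f v = ∫ u, (W v u : ℂ) * f u ∂μ01

/-- Entrywise complexification of a real activation function. -/
def rhoC (ρ : ℝ → ℝ) (z : ℂ) : ℂ := (ρ z.re : ℂ) + (ρ z.im : ℂ) * Complex.I

/-- The realization of an SCNN (filters `filt`, weights `wt`, activation `ρ`) on a graph with
GSO `Δ`: `graphNet F filt wt ρ Δ x l j` is the `j`-th feature of the `l`-th layer, on input
feature map `x`.  Layer `l+1` is obtained from layer `l` via the filters `filt l j k`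
and weights `wt l j k`. -/
def graphNet (F : ℕ → ℕ) (filt : ℕ → ℕ → ℕ → ℝ → ℝ) (wt : ℕ → ℕ → ℕ → ℝ)
    (ρ : ℝ → ℝ) {n : ℕ} (Δ : Matrix (Fin n) (Fin n) ℝ) (x : ℕ → Fin n → ℂ) :
    ℕ → ℕ → Fin n → ℂ
  | 0, j => x j
  | (l + 1), j => fun v =>
      rhoC ρ (∑ k ∈ Finset.range (F l),
        (wt l j k : ℂ) * (((cfc (filt l j k) Δ).map Complex.ofReal).mulVec
          (graphNet F filt wt ρ Δ x l k)) v)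

instance : ContinuousFunctionalCalculus ℝ (L2 →L[ℂ] L2) IsSelfAdjoint :=
  IsSelfAdjoint.instContinuousFunctionalCalculus

/-- `y` is a realization of the SCNN (filters `filt`, weights `wt`, activation `ρ`,
`Lnum` layers, feature dimensions `F`) on the graphon shift operator `T`:
`y l j` is the `j`-th feature of the `l`-th layer, and each layer is obtained from the
previous one by filtering with `cfc (filt l j k) T`, taking weighted sums, and applying
the activation pointwise almost everywhere. -/
def IsGraphonNet (Lnum : ℕ) (F : ℕ → ℕ) (filt : ℕ → ℕ → ℕ → ℝ → ℝ) (wt : ℕ → ℕ → ℕ → ℝ)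
    (ρ : ℝ → ℝ) (T : L2 →L[ℂ] L2) (y : ℕ → ℕ → L2) : Prop :=
  ∀ l < Lnum, ∀ j < F (l + 1),
    ⇑(y (l + 1) j) =ᵐ[μ01]
      fun v => rhoC ρ
        (((∑ k ∈ Finset.range (F l),
          (wt l j k : ℂ) • (cfc (filt l j k) T) (y l k) : L2) : ℝ → ℂ) v)

/-!
The operator `T_{W_A}` sends `f` to the step function whose coefficient vector is
`n Δ (∫_{P_k} f)_k`. Writing `Δ = ∑ᵢ λᵢ xⁱ (xⁱ)ᵀ` and using `⟪ψ_y, f⟫ = ∑_k conj(y_k) ∫_{P_k} f`,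
this is the finite-rank operator `f ↦ ∑ᵢ λᵢ ⟪φᵢ, f⟫ φᵢ` with `φᵢ = √n ψ_{xⁱ}`, and the `φᵢ` are
orthonormal since `⟪ψ_y, ψ_{y'}⟫ = ⟨y, y'⟩ / n`. Every claim is then a fact about such diagonal
operators; for `z ≠ 0` different from all `λᵢ`, the inverse of `z - T` is
`z⁻¹ + ∑ᵢ λᵢ / (z (z - λᵢ)) ⟪φᵢ, ·⟫ φᵢ`.
-/

open scoped InnerProductSpace

section SpectralSum

variable {𝕜 E ι : Type*} [RCLike 𝕜] [NormedAddCommGroup E] [InnerProductSpace 𝕜 E] [Fintype ι]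

def spectralSum (e : ι → E) : (ι → 𝕜) →ₗ[𝕜] E →L[𝕜] E :=
  Fintype.linearCombination 𝕜 fun i => (innerSL 𝕜 (e i)).smulRight (e i)

variable {e : ι → E}

lemma spectralSum_apply (c : ι → 𝕜) (f : E) :
    spectralSum e c f = ∑ i, (c i * ⟪e i, f⟫_𝕜) • e i := by
  simp [spectralSum, Fintype.linearCombination_apply, smul_smul]

lemma spectralSum_apply_eq_zero {f : E} (hf : ∀ i, ⟪e i, f⟫_𝕜 = 0) (c : ι → 𝕜) :
    spectralSum e c f = 0 := by
  simp [spectralSum_apply, hf]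

lemma Orthonormal.inner_spectralSum_apply (he : Orthonormal 𝕜 e) (c : ι → 𝕜) (i : ι) (f : E) :
    ⟪e i, spectralSum e c f⟫_𝕜 = c i * ⟪e i, f⟫_𝕜 := by
  classical
  simp [spectralSum_apply, inner_sum, inner_smul_right, orthonormal_iff_ite.mp he]

lemma Orthonormal.spectralSum_apply_self (he : Orthonormal 𝕜 e) (c : ι → 𝕜) (i : ι) :
    spectralSum e c (e i) = c i • e i := by
  classical
  simp [spectralSum_apply, orthonormal_iff_ite.mp he]

lemma Orthonormal.spectralSum_mul (he : Orthonormal 𝕜 e) (c d : ι → 𝕜) :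
    spectralSum e c * spectralSum e d = spectralSum e (c * d) := by
  ext f
  rw [mul_apply_eq_comp, spectralSum_apply c, spectralSum_apply (c * d)]
  simp only [he.inner_spectralSum_apply, Pi.mul_apply, mul_assoc]

lemma Orthonormal.isUnit_algebraMap_sub_spectralSum (he : Orthonormal 𝕜 e) {c : ι → 𝕜} {z : 𝕜}
    (hz : z ≠ 0) (hc : ∀ i, c i ≠ z) : IsUnit (algebraMap 𝕜 _ z - spectralSum e c) := by
  set d : ι → 𝕜 := fun i => c i / (z * (z - c i))
  have hd : z • d - z⁻¹ • c - c * d = 0 := funext fun i => by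
    have := sub_ne_zero.mpr (hc i).symm
    simp only [d, Pi.sub_apply, Pi.smul_apply, Pi.mul_apply, smul_eq_mul, Pi.zero_apply]
    field_simp
    ring
  have hright :
      (algebraMap 𝕜 _ z - spectralSum e c) * (algebraMap 𝕜 _ z⁻¹ + spectralSum e d) = 1 := by
    rw [sub_mul, mul_add, mul_add, ← map_mul, mul_inv_cancel₀ hz, map_one, ← Algebra.smul_def,
      ← Algebra.commutes, ← Algebra.smul_def, he.spectralSum_mul, ← map_smul, ← map_smul,
      sub_add_eq_sub_sub, add_sub_assoc, add_sub_assoc, ← map_sub, ← map_sub, hd, map_zero,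
      add_zero]
  have hcomm :
      Commute (algebraMap 𝕜 _ z - spectralSum e c) (algebraMap 𝕜 _ z⁻¹ + spectralSum e d) := by
    refine (Algebra.commute_algebraMap_right _ _).add_right ?_
    refine (Algebra.commute_algebraMap_left _ _).sub_left ?_
    rw [Commute, SemiconjBy, he.spectralSum_mul, he.spectralSum_mul, mul_comm]
  exact isUnit_iff_exists.mpr ⟨_, hright, hcomm.eq ▸ hright⟩

lemma Orthonormal.mem_spectrum_spectralSum_iff (he : Orthonormal 𝕜 e) {c : ι → 𝕜} {z : 𝕜}
    (hz : z ≠ 0) : z ∈ spectrum 𝕜 (spectralSum e c) ↔ ∃ i, c i = z := by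
  constructor
  · intro hzσ
    by_contra! hc
    exact hzσ (he.isUnit_algebraMap_sub_spectralSum hz hc)
  · rintro ⟨i, rfl⟩ hunit
    have hker : (algebraMap 𝕜 _ (c i) - spectralSum e c) (e i) = 0 := by
      simp [he.spectralSum_apply_self, Algebra.algebraMap_eq_smul_one]
    exact he.ne_zero i <| (ContinuousLinearMap.isHomeomorph_of_isUnit hunit).injective <|
      hker.trans (map_zero _).symm

end SpectralSum

section StepFunctions

lemma MeasureTheory.indicatorConstLp_smul {𝕜 α E : Type*} [MeasurableSpace α] {μ : Measure α}
    [NormedAddCommGroup E] [NormedRing 𝕜] [Module 𝕜 E] [IsBoundedSMul 𝕜 E] {p : ENNReal}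
    {s : Set α} (hs : MeasurableSet s) (hμs : μ s ≠ ⊤) (a : 𝕜) (c : E) :
    a • indicatorConstLp p hs hμs c = indicatorConstLp p hs hμs (a • c) := by
  simp_rw [indicatorConstLp, ← MemLp.toLp_const_smul, Set.indicator_const_smul]
  rfl

variable {n : ℕ}

lemma part_subset_Icc (j : Fin n) : part n j ⊆ Set.Icc 0 1 := by
  have hn : (0 : ℝ) < n := by exact_mod_cast j.pos
  rintro v ⟨h1, h2⟩
  refine ⟨le_trans (by positivity) h1, h2.le.trans ?_⟩
  rw [div_le_one hn]
  exact_mod_cast j.isLt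

lemma measureReal_part (j : Fin n) : μ01.real (part n j) = (n : ℝ)⁻¹ := by
  have hn : (0 : ℝ) < n := by exact_mod_cast j.pos
  rw [measureReal_restrict_apply (part_meas n j),
    Set.inter_eq_self_of_subset_left (part_subset_Icc j), part,
    Real.volume_real_Ico_of_le (by gcongr; linarith)]
  field_simp
  ring

lemma disjoint_part {j k : Fin n} (hjk : j ≠ k) : Disjoint (part n j) (part n k) := by
  have hn : (0 : ℝ) < n := by exact_mod_cast j.pos
  rw [part, part, Set.Ico_disjoint_Ico]
  rcases lt_or_gt_of_ne hjk with h | h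
  · have h' : (j : ℝ) + 1 ≤ k := by exact_mod_cast h
    exact (min_le_left _ _).trans <|
      ((div_le_div_iff_of_pos_right hn).mpr h').trans (le_max_right _ _)
  · have h' : (k : ℝ) + 1 ≤ j := by exact_mod_cast h
    exact (min_le_right _ _).trans <|
      ((div_le_div_iff_of_pos_right hn).mpr h').trans (le_max_left _ _)

def partIndicator (j : Fin n) : L2 := indicatorConstLp 2 (part_meas n j) (part_ne_top n j) 1

lemma inducedSignal_eq_sum (y : Fin n → ℂ) : inducedSignal y = ∑ j, y j • partIndicator j := by
  simp [inducedSignal, partIndicator, indicatorConstLp_smul]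

lemma sum_smul_inducedSignal {ι : Type*} [Fintype ι] (c : ι → ℂ) (y : ι → Fin n → ℂ) :
    ∑ i, c i • inducedSignal (y i) = inducedSignal fun j => ∑ i, c i * y i j := by
  simp only [inducedSignal_eq_sum, Finset.smul_sum, smul_smul, Finset.sum_smul]
  exact Finset.sum_comm

lemma coeFn_inducedSignal (y : Fin n → ℂ) :
    ⇑(inducedSignal y) =ᵐ[μ01] fun v => ∑ j, (part n j).indicator (fun _ => y j) v := by
  filter_upwards [Lp.coeFn_fun_finsetSum (μ := μ01) Finset.univ
      fun j => indicatorConstLp 2 (part_meas n j) (part_ne_top n j) (y j),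
    ae_all_iff.mpr fun j => indicatorConstLp_coeFn (hs := part_meas n j)
      (hμs := part_ne_top n j) (c := y j)] with v hsum hind
  rw [inducedSignal, hsum]
  exact Finset.sum_congr rfl fun j _ => hind j

lemma inner_partIndicator (j : Fin n) (f : L2) :
    ⟪partIndicator j, f⟫_ℂ = ∫ u in part n j, f u ∂μ01 :=
  L2.inner_indicatorConstLp_one _ _ f

lemma inner_partIndicator_partIndicator (j k : Fin n) :
    ⟪partIndicator j, partIndicator k⟫_ℂ = if j = k then (n : ℂ)⁻¹ else 0 := by
  rw [partIndicator, partIndicator, L2.inner_indicatorConstLp_one_indicatorConstLp_one]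
  split_ifs with hjk
  · subst hjk
    rw [Set.inter_self, measureReal_part]
    push_cast
    rfl
  · rw [Set.disjoint_iff_inter_eq_empty.mp (disjoint_part hjk)]
    simp

lemma inner_inducedSignal (y : Fin n → ℂ) (f : L2) :
    ⟪inducedSignal y, f⟫_ℂ = ∑ j, starRingEnd ℂ (y j) * ∫ u in part n j, f u ∂μ01 := by
  simp [inducedSignal_eq_sum, sum_inner, inner_smul_left, inner_partIndicator]

lemma inner_inducedSignal_inducedSignal (y y' : Fin n → ℂ) :
    ⟪inducedSignal y, inducedSignal y'⟫_ℂ = (∑ j, starRingEnd ℂ (y j) * y' j) / n := by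
  simp only [inducedSignal_eq_sum, inner_sum, inner_smul_right, sum_inner, inner_smul_left,
    inner_partIndicator_partIndicator, mul_ite, mul_zero, Finset.sum_ite_eq', Finset.mem_univ,
    if_true, div_eq_mul_inv]
  rw [Finset.sum_mul]
  exact Finset.sum_congr rfl fun _ _ => by ring

end StepFunctions

lemma IsGRSO.apply_eq_inducedSignal {n : ℕ} {B : Matrix (Fin n) (Fin n) ℝ} {T : L2 →L[ℂ] L2}
    (hT : IsGRSO (inducedGraphon B) T) (f : L2) :
    T f = inducedSignal fun i => ∑ k, (B i k : ℂ) * ∫ u in part n k, f u ∂μ01 := by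
  have hf : Integrable f μ01 := (Lp.memLp f).integrable one_le_two
  apply Lp.ext
  filter_upwards [hT f, coeFn_inducedSignal _] with v hTv hψ
  have hkernel : ∀ u, (inducedGraphon B v u : ℂ) * f u
      = ∑ i, ∑ k, ((B i k : ℂ) * (part n i).indicator 1 v) * (part n k).indicator f u := by
    intro u
    simp only [inducedGraphon, Complex.ofReal_sum, Complex.ofReal_mul, Finset.sum_mul]
    refine Finset.sum_congr rfl fun i _ => Finset.sum_congr rfl fun k _ => ?_
    by_cases hu : u ∈ part n k <;> by_cases hv : v ∈ part n i <;> simp [hu, hv]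
  rw [hTv, hψ, integral_congr_ae (.of_forall hkernel)]
  rw [integral_finsetSum _ fun i _ => integrable_finsetSum _ fun k _ =>
    (hf.indicator (part_meas n k)).const_mul _]
  refine Finset.sum_congr rfl fun i _ => ?_
  rw [integral_finsetSum _ fun k _ => (hf.indicator (part_meas n k)).const_mul _]
  simp only [integral_const_mul, integral_indicator (part_meas n _)]
  by_cases hv : v ∈ part n i <;> simp [hv]

lemma sum_mul_eq_ite_of_orthonormal_rows {R m : Type*} [CommRing R] [Fintype m] [DecidableEq m]
    {x : m → m → R} (hx : ∀ i i', ∑ j, x i j * x i' j = if i = i' then 1 else 0) (p k : m) :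
    ∑ i, x i p * x i k = if p = k then 1 else 0 := by
  have hrows : Matrix.of x * (Matrix.of x).transpose = 1 := by
    ext i i'
    simpa [Matrix.mul_apply, Matrix.one_apply] using hx i i'
  simpa [Matrix.mul_apply, Matrix.one_apply] using
    Matrix.ext_iff.mpr (mul_eq_one_comm.mp hrows) p k

lemma Matrix.apply_eq_sum_eigen {m : Type*} [Fintype m] [DecidableEq m] {Δ : Matrix m m ℝ}
    {x : m → m → ℝ} {lam : m → ℝ} (heig : ∀ i, Δ.mulVec (x i) = lam i • x i)
    (horth : ∀ i i', ∑ j, x i j * x i' j = if i = i' then 1 else 0) (p k : m) :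
    Δ p k = ∑ i, lam i * x i p * x i k := by
  have hrow : ∀ i, ∑ q, Δ p q * x i q = lam i * x i p := fun i => by
    simpa [Matrix.mulVec, dotProduct] using congr_fun (heig i) p
  calc Δ p k = ∑ q, Δ p q * ∑ i, x i q * x i k := by
        simp [sum_mul_eq_ite_of_orthonormal_rows horth]
    _ = ∑ i, (∑ q, Δ p q * x i q) * x i k := by
        simp only [Finset.mul_sum, Finset.sum_mul, mul_assoc]
        exact Finset.sum_comm
    _ = ∑ i, lam i * x i p * x i k := by simp only [hrow]

section GraphonOfMatrix

lemma sqrt_natCast_mul_self (n : ℕ) : (Real.sqrt n : ℂ) * Real.sqrt n = n := by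
  rw [← Complex.ofReal_mul, Real.mul_self_sqrt n.cast_nonneg, Complex.ofReal_natCast]

variable {n : ℕ} {x : Fin n → Fin n → ℝ}

lemma orthonormal_sqrt_smul_inducedSignal
    (horth : ∀ i i', ∑ j, x i j * x i' j = if i = i' then 1 else 0) :
    Orthonormal ℂ fun i => (Real.sqrt n : ℂ) • inducedSignal fun j => (x i j : ℂ) := by
  rw [orthonormal_iff_ite]
  intro i i'
  have hn : (n : ℂ) ≠ 0 := Nat.cast_ne_zero.mpr i.pos.ne'
  simp only [inner_smul_left, inner_smul_right, inner_inducedSignal_inducedSignal,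
    Complex.conj_ofReal, ← Complex.ofReal_mul, ← Complex.ofReal_sum, horth]
  rw [← mul_assoc, sqrt_natCast_mul_self, mul_div_cancel₀ _ hn]
  split_ifs <;> simp

lemma IsGRSO.eq_spectralSum {Δ : Matrix (Fin n) (Fin n) ℝ} {lam : Fin n → ℝ} {T : L2 →L[ℂ] L2}
    (heig : ∀ i, Δ.mulVec (x i) = lam i • x i)
    (horth : ∀ i i', ∑ j, x i j * x i' j = if i = i' then 1 else 0)
    (hT : IsGRSO (inducedGraphon ((n : ℝ) • Δ)) T) :
    T = spectralSum (fun i => (Real.sqrt n : ℂ) • inducedSignal fun j => (x i j : ℂ))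
      fun i => (lam i : ℂ) := by
  ext f : 1
  rw [hT.apply_eq_inducedSignal, spectralSum_apply]
  simp only [inner_smul_left, inner_inducedSignal, Complex.conj_ofReal, smul_smul,
    sum_smul_inducedSignal]
  congr 1
  funext p
  simp only [Matrix.smul_apply, Matrix.apply_eq_sum_eigen heig horth, smul_eq_mul,
    Complex.ofReal_mul, Complex.ofReal_sum, Complex.ofReal_natCast, Finset.mul_sum, Finset.sum_mul]
  rw [Finset.sum_comm]
  refine Finset.sum_congr rfl fun i _ => Finset.sum_congr rfl fun k _ => ?_
  linear_combination
    (lam i * x i p * x i k * ∫ u in part n k, f u ∂μ01 : ℂ) * (sqrt_natCast_mul_self n).symm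

end GraphonOfMatrix

theorem statement1_general (n : ℕ) (Δ : Matrix (Fin n) (Fin n) ℝ)
    (x : Fin n → Fin n → ℝ) (lam : Fin n → ℝ)
    (heig : ∀ i, Δ.mulVec (x i) = lam i • x i)
    (horth : ∀ i i', ∑ j, x i j * x i' j = (if i = i' then (1 : ℝ) else 0))
    (T : L2 →L[ℂ] L2) (hT : IsGRSO (inducedGraphon ((n : ℝ) • Δ)) T) :
    (∀ i, T ((Real.sqrt n : ℂ) • inducedSignal (fun j => (x i j : ℂ))) =
        (lam i : ℂ) • ((Real.sqrt n : ℂ) • inducedSignal (fun j => (x i j : ℂ)))) ∧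
    Orthonormal ℂ (fun i : Fin n =>
      (Real.sqrt n : ℂ) • inducedSignal (fun j => (x i j : ℂ))) ∧
    (∀ f : L2,
      (∀ i : Fin n,
        (inner ℂ ((Real.sqrt n : ℂ) • inducedSignal (fun j => (x i j : ℂ))) f : ℂ) = 0) →
      T f = 0) ∧
    (∀ z : ℂ, z ≠ 0 → (z ∈ spectrum ℂ T ↔ ∃ i, (lam i : ℂ) = z)) := by
  have hφ := orthonormal_sqrt_smul_inducedSignal horth
  rw [hT.eq_spectralSum heig horth]
  exact ⟨hφ.spectralSum_apply_self _, hφ, fun f hf => spectralSum_apply_eq_zero hf _,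
    fun z hz => hφ.mem_spectrum_spectralSum_iff hz⟩

/-- If `Δ` is symmetric with orthonormal eigenbasis `x¹,…,xⁿ` and eigenvalues
`λ¹,…,λⁿ`, and `A = nΔ`, then the `√n·ψ_{xⁱ}` are eigenvectors of `T_{W_A}` with eigenvalues
`λⁱ`, they are orthonormal in `L²[0,1]`, every `f` orthogonal to all of them satisfies
`T_{W_A} f = 0`, and the nonzero spectrum of `T_{W_A}` consists exactly of the nonzero
eigenvalues of `Δ`. -/
theorem statement1 (n : ℕ) (Δ : Matrix (Fin n) (Fin n) ℝ) (hΔ : Δ.IsSymm)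
    (x : Fin n → Fin n → ℝ) (lam : Fin n → ℝ)
    (heig : ∀ i, Δ.mulVec (x i) = lam i • x i)
    (horth : ∀ i i', ∑ j, x i j * x i' j = (if i = i' then (1 : ℝ) else 0))
    (T : L2 →L[ℂ] L2) (hT : IsGRSO (inducedGraphon ((n : ℝ) • Δ)) T) :
    (∀ i, T ((Real.sqrt n : ℂ) • inducedSignal (fun j => (x i j : ℂ))) =
        (lam i : ℂ) • ((Real.sqrt n : ℂ) • inducedSignal (fun j => (x i j : ℂ)))) ∧
    Orthonormal ℂ (fun i : Fin n =>
      (Real.sqrt n : ℂ) • inducedSignal (fun j => (x i j : ℂ))) ∧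
    (∀ f : L2,
      (∀ i : Fin n,
        (inner ℂ ((Real.sqrt n : ℂ) • inducedSignal (fun j => (x i j : ℂ))) f : ℂ) = 0) →
      T f = 0) ∧
    (∀ z : ℂ, z ≠ 0 → (z ∈ spectrum ℂ T ↔ ∃ i, (lam i : ℂ) = z)) :=
  statement1_general n Δ x lam heig horth T hT
end
end

section
/- Let γ > 0 and let h : ℝ → ℂ be a continuous γ-periodic function whose Fourier coefficients ĥ(n) = (1/γ)∫_{−γ/2}^{γ/2} h(t)·e^{−2πint/γ} dt satisfy K := Σ_{n∈ℤ} |n|·|ĥ(n)| < ∞. Let A and B be bounded self-adjoint operators on a complex Hilbert space H with ‖A − B‖_{H→H} ≤ ε for some ε > 0. Then ‖h(A) − h(B)‖_{H→H} ≤ (2 + (2π/γ)·K)·ε. -/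
/-!
Expand `h` in its Fourier series `h(t) = ∑ ĥ(n) e^{2πint/γ}`; the series converges absolutely,
so it can be pushed through the continuous functional calculus, and `h(A) - h(B)` becomes
`∑ ĥ(n) (e^{i s_n A} - e^{i s_n B})` with `s_n = 2πn/γ`. For self-adjoint `S, T` the Duhamel
formula `e^{iS} - e^{iT} = ∫₀¹ e^{itS} i(S - T) e^{i(1-t)T} dt` with unitary outer factors gives
`‖e^{iS} - e^{iT}‖ ≤ ‖S - T‖`, so the `n`-th term is at most `|s_n| ‖ĥ(n)‖ ‖A - B‖`, and summing
yields `‖h(A) - h(B)‖ ≤ (2π/γ) K ‖A - B‖`.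
-/

open Set Real

section ExpLipschitz

variable {𝔸 : Type*} [NormedRing 𝔸] [NormedAlgebra ℂ 𝔸] [CompleteSpace 𝔸]

theorem norm_exp_sub_exp_le {x y : 𝔸}
    (hx : ∀ t ∈ Icc (0 : ℝ) 1, ‖NormedSpace.exp ((t : ℂ) • x)‖ ≤ 1)
    (hy : ∀ t ∈ Icc (0 : ℝ) 1, ‖NormedSpace.exp ((t : ℂ) • y)‖ ≤ 1) :
    ‖NormedSpace.exp x - NormedSpace.exp y‖ ≤ ‖x - y‖ := by
  let f : ℝ → 𝔸 := fun t =>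
    NormedSpace.exp ((t : ℂ) • x) * NormedSpace.exp (((1 - t : ℝ) : ℂ) • y)
  let f' : ℝ → 𝔸 := fun t =>
    NormedSpace.exp ((t : ℂ) • x) * (x - y) * NormedSpace.exp (((1 - t : ℝ) : ℂ) • y)
  have hf : ∀ t, HasDerivAt f (f' t) t := by
    intro t
    have hex := (hasDerivAt_exp_smul_const x (t : ℂ)).scomp t Complex.ofRealCLM.hasDerivAt
    have hey := (hasDerivAt_exp_smul_const' y ((1 - t : ℝ) : ℂ)).scomp t
      (((hasDerivAt_id t).const_sub 1).ofReal_comp :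
        HasDerivAt (fun s : ℝ => ((1 - s : ℝ) : ℂ)) _ t)
    refine (hex.mul hey).congr_deriv ?_
    simp only [f', Function.comp_apply, id, Complex.ofRealCLM_apply, Complex.ofReal_one,
      Complex.ofReal_neg, one_smul, neg_one_smul]
    noncomm_ring
  have hf'_le : ∀ t ∈ Ico (0 : ℝ) 1, ‖f' t‖ ≤ ‖x - y‖ := by
    rintro t ⟨ht0, ht1⟩
    calc ‖f' t‖ ≤ ‖NormedSpace.exp ((t : ℂ) • x)‖ * ‖x - y‖ *
          ‖NormedSpace.exp (((1 - t : ℝ) : ℂ) • y)‖ := norm_mul₃_le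
      _ ≤ 1 * ‖x - y‖ * 1 := by
        gcongr
        · exact hx t ⟨ht0, ht1.le⟩
        · exact hy (1 - t) ⟨by linarith, by linarith⟩
      _ = ‖x - y‖ := by ring
  simpa [f] using norm_image_sub_le_of_norm_deriv_le_segment_01'
    (fun t _ => (hf t).hasDerivWithinAt) hf'_le

end ExpLipschitz

section CStarAlgebra

variable {A : Type*} [CStarAlgebra A]

lemma IsSelfAdjoint.ofReal_smul {a : A} (ha : IsSelfAdjoint a) (t : ℝ) :
    IsSelfAdjoint ((t : ℂ) • a) :=
  IsSelfAdjoint.smul (Complex.conj_ofReal t) ha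

lemma IsSelfAdjoint.norm_exp_I_smul_le_one {a : A} (ha : IsSelfAdjoint a) :
    ‖NormedSpace.exp (Complex.I • a)‖ ≤ 1 := by
  rcases subsingleton_or_nontrivial A with hA | hA
  · simp [Subsingleton.elim (NormedSpace.exp (Complex.I • a)) 0]
  · exact (CStarRing.norm_coe_unitary (selfAdjoint.expUnitary ⟨a, ha⟩)).le

lemma IsSelfAdjoint.norm_exp_I_smul_sub_le {a b : A} (ha : IsSelfAdjoint a)
    (hb : IsSelfAdjoint b) :
    ‖NormedSpace.exp (Complex.I • a) - NormedSpace.exp (Complex.I • b)‖ ≤ ‖a - b‖ := by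
  have hunit : ∀ {c : A}, IsSelfAdjoint c → ∀ t ∈ Icc (0 : ℝ) 1,
      ‖NormedSpace.exp ((t : ℂ) • Complex.I • c)‖ ≤ 1 := fun hc t _ => by
    rw [smul_comm]
    exact (hc.ofReal_smul t).norm_exp_I_smul_le_one
  calc _ ≤ ‖Complex.I • a - Complex.I • b‖ := norm_exp_sub_exp_le (hunit ha) (hunit hb)
    _ = ‖a - b‖ := by rw [← smul_sub, norm_smul, Complex.norm_I, one_mul]

lemma cfc_exp_const_mul (c : ℂ) (a : A) [IsStarNormal a] :
    cfc (fun z : ℂ => Complex.exp (c * z)) a = NormedSpace.exp (c • a) := by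
  rw [cfc_comp' Complex.exp (c * ·) a, cfc_const_mul_id c a, CFC.complex_exp_eq_normedSpace_exp]

lemma IsSelfAdjoint.cfc_fourier_re {γ : ℝ} (n : ℤ) {a : A} (ha : IsSelfAdjoint a) :
    cfc (fun z : ℂ => fourier n (z.re : AddCircle γ)) a =
      NormedSpace.exp (Complex.I • ((2 * π * n / γ : ℝ) : ℂ) • a) := by
  have : IsStarNormal a := ha.isStarNormal
  rw [smul_smul, ← cfc_exp_const_mul]
  refine cfc_congr fun z hz => ?_
  rw [fourier_coe_apply, ← ha.mem_spectrum_eq_re hz]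
  congr 1
  push_cast
  ring

lemma IsSelfAdjoint.norm_cfc_fourier_sub_le {γ : ℝ} (n : ℤ) {a b : A} (ha : IsSelfAdjoint a)
    (hb : IsSelfAdjoint b) :
    ‖cfc (fun z : ℂ => fourier n (z.re : AddCircle γ)) a -
        cfc (fun z : ℂ => fourier n (z.re : AddCircle γ)) b‖ ≤
      |2 * π * n / γ| * ‖a - b‖ := by
  rw [ha.cfc_fourier_re, hb.cfc_fourier_re]
  calc _ ≤ ‖((2 * π * n / γ : ℝ) : ℂ) • a - ((2 * π * n / γ : ℝ) : ℂ) • b‖ :=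
        (ha.ofReal_smul _).norm_exp_I_smul_sub_le (hb.ofReal_smul _)
    _ = |2 * π * n / γ| * ‖a - b‖ := by
        rw [← smul_sub, norm_smul, Complex.norm_real, Real.norm_eq_abs]

lemma IsSelfAdjoint.hasSum_cfc_fourier {γ : ℝ} [Fact (0 < γ)] {F : C(AddCircle γ, ℂ)}
    (hF : Summable (fourierCoeff F)) {a : A} (ha : IsSelfAdjoint a) :
    HasSum (fun n => fourierCoeff F n • cfc (fun z : ℂ => fourier n (z.re : AddCircle γ)) a)
      (cfc (fun z : ℂ => F (z.re : AddCircle γ)) a) := by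
  let q : C(spectrum ℂ a, AddCircle γ) := ⟨fun z => ((z : ℂ).re : AddCircle γ), by fun_prop⟩
  let Φ := (cfcHom (R := ℂ) ha.isStarNormal).comp (ContinuousMap.compStarAlgHom' ℂ ℂ q)
  have hΦ : Continuous Φ :=
    (cfcHom_isClosedEmbedding (R := ℂ) ha.isStarNormal).continuous.comp
      (ContinuousMap.continuous_precomp q)
  have hΦ_apply : ∀ G : C(AddCircle γ, ℂ), Φ G = cfc (fun z : ℂ => G (z.re : AddCircle γ)) a :=
    fun G => (cfc_apply (fun z : ℂ => G (z.re : AddCircle γ)) a).symm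
  have hsum := (hasSum_fourier_series_of_summable hF).map Φ hΦ
  simp only [Function.comp_def, map_smul] at hsum
  simpa only [hΦ_apply] using hsum

lemma summable_of_summable_abs_mul_norm {E : Type*} [NormedAddCommGroup E] [CompleteSpace E]
    {f : ℤ → E} (hf : Summable fun n : ℤ => (|n| : ℝ) * ‖f n‖) : Summable f :=
  hf.of_norm_bounded_eventually <| (Filter.eventually_cofinite_ne 0).mono fun n hn =>
    le_mul_of_one_le_left (norm_nonneg _) (by exact_mod_cast Int.one_le_abs hn)

theorem IsSelfAdjoint.norm_cfc_sub_le_of_hasSum_fourierCoeff {γ : ℝ} [hγ : Fact (0 < γ)]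
    {F : C(AddCircle γ, ℂ)} {K : ℝ} (hK : HasSum (fun n : ℤ => (|n| : ℝ) * ‖fourierCoeff F n‖) K)
    {a b : A} (ha : IsSelfAdjoint a) (hb : IsSelfAdjoint b) :
    ‖cfc (fun z : ℂ => F (z.re : AddCircle γ)) a - cfc (fun z : ℂ => F (z.re : AddCircle γ)) b‖ ≤
      2 * π / γ * K * ‖a - b‖ := by
  have hF := summable_of_summable_abs_mul_norm hK.summable
  have hsum := (ha.hasSum_cfc_fourier hF).sub (hb.hasSum_cfc_fourier hF)
  rw [mul_right_comm]
  refine hsum.norm_le_of_bounded (hK.mul_left (2 * π / γ * ‖a - b‖)) fun n => ?_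
  rw [← smul_sub, norm_smul]
  calc _ ≤ ‖fourierCoeff F n‖ * (|2 * π * n / γ| * ‖a - b‖) := by
        gcongr
        exact ha.norm_cfc_fourier_sub_le n hb
    _ = 2 * π / γ * ‖a - b‖ * (|(n : ℝ)| * ‖fourierCoeff F n‖) := by
        rw [abs_div, abs_mul, abs_of_pos two_pi_pos, abs_of_pos hγ.out]
        ring

end CStarAlgebra

lemma Function.Periodic.fourierCoeff_lift {γ : ℝ} [Fact (0 < γ)] {h : ℝ → ℂ}
    (hper : Function.Periodic h γ) (n : ℤ) :
    fourierCoeff hper.lift n = (1 / (γ : ℂ)) *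
      ∫ t in (-γ/2)..(γ/2), h t * Complex.exp (-(2 * π * Complex.I * n * t / γ)) := by
  rw [fourierCoeff_eq_intervalIntegral _ n (-γ/2), show -γ/2 + γ = γ/2 by ring, Complex.real_smul,
    Complex.ofReal_div, Complex.ofReal_one]
  congr 1
  refine intervalIntegral.integral_congr fun t _ => ?_
  simp only [hper.lift_coe, smul_eq_mul, fourier_coe_apply, mul_comm (h t)]
  congr 2
  push_cast
  ring

theorem statement6_general (γ : ℝ) (hγ : 0 < γ) (h : ℝ → ℂ) (hh : Continuous h)
    (hper : Function.Periodic h γ)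
    (c : ℤ → ℂ)
    (hc : ∀ n : ℤ, c n = (1 / (γ : ℂ)) *
      ∫ t in (-γ/2)..(γ/2), h t * Complex.exp (-(2 * Real.pi * Complex.I * n * t / γ)))
    (K : ℝ) (hK : HasSum (fun n : ℤ => (|n| : ℝ) * ‖c n‖) K)
    (H : Type*) [NormedAddCommGroup H] [InnerProductSpace ℂ H] [CompleteSpace H]
    (A B : H →L[ℂ] H) (hA : IsSelfAdjoint A) (hB : IsSelfAdjoint B)
    (ε : ℝ) (hAB : ‖A - B‖ ≤ ε) :
    ‖cfc (fun z : ℂ => h z.re) A - cfc (fun z : ℂ => h z.re) B‖ ≤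
      (2 + (2 * Real.pi / γ) * K) * ε := by
  have : Fact (0 < γ) := ⟨hγ⟩
  let F : C(AddCircle γ, ℂ) := ⟨hper.lift, continuous_coinduced_dom.mpr hh⟩
  have hcoeff : ∀ n, fourierCoeff F n = c n := fun n =>
    (hper.fourierCoeff_lift n).trans (hc n).symm
  have hbound := hA.norm_cfc_sub_le_of_hasSum_fourierCoeff (F := F)
    (by simpa only [hcoeff] using hK) hB
  simp only [F, ContinuousMap.coe_mk, hper.lift_coe] at hbound
  have hK_nonneg : 0 ≤ K := hK.nonneg fun n => by positivity
  calc _ ≤ 2 * π / γ * K * ‖A - B‖ := hbound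
    _ ≤ 2 * π / γ * K * ε := by gcongr
    _ ≤ (2 + 2 * π / γ * K) * ε := by nlinarith [norm_nonneg (A - B)]

/-- Let `γ > 0` and `h : ℝ → ℂ` be continuous and `γ`-periodic with Fourier
coefficients `c n = (1/γ)∫_{−γ/2}^{γ/2} h(t)·e^{−2πint/γ} dt` satisfying
`K = Σ_{n∈ℤ} |n|·|c n| < ∞`.  If `A, B` are bounded self-adjoint operators on a complex
Hilbert space with `‖A − B‖ ≤ ε`, then `‖h(A) − h(B)‖ ≤ (2 + (2π/γ)·K)·ε`.
Since the spectrum of a self-adjoint operator is real, `h(T)` is realized as the continuous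
functional calculus of `z ↦ h(Re z)` applied to `T`. -/
theorem statement6 (γ : ℝ) (hγ : 0 < γ) (h : ℝ → ℂ) (hh : Continuous h)
    (hper : Function.Periodic h γ)
    (c : ℤ → ℂ)
    (hc : ∀ n : ℤ, c n = (1 / (γ : ℂ)) *
      ∫ t in (-γ/2)..(γ/2), h t * Complex.exp (-(2 * Real.pi * Complex.I * n * t / γ)))
    (K : ℝ) (hK : HasSum (fun n : ℤ => (|n| : ℝ) * ‖c n‖) K)
    (H : Type*) [NormedAddCommGroup H] [InnerProductSpace ℂ H] [CompleteSpace H]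
    (A B : H →L[ℂ] H) (hA : IsSelfAdjoint A) (hB : IsSelfAdjoint B)
    (ε : ℝ) (hε : 0 < ε) (hAB : ‖A - B‖ ≤ ε) :
    ‖cfc (fun z : ℂ => h z.re) A - cfc (fun z : ℂ => h z.re) B‖ ≤
      (2 + (2 * Real.pi / γ) * K) * ε :=
  statement6_general γ hγ h hh hper c hc K hK H A B hA hB ε hAB
end

section
/- Let (A_n)_{n∈ℕ} be a sequence of symmetric matrices A_n ∈ ℝ^{n×n} and let W be a graphon such that ‖T_{W_{A_n}} − T_W‖_{L²[0,1]→L²[0,1]} → 0 as n → ∞. Let h : ℝ → ℝ be continuous. Then: (1) ‖h(T_{W_{A_n}}) − h(T_W)‖_{L²[0,1]→L²[0,1]} → 0; and (2) if (x_n)_n is a sequence of signals x_n ∈ ℂⁿ and ψ ∈ L²[0,1] is such that ‖ψ_{x_n} − ψ‖_{L²[0,1]} → 0, then ‖h(T_{W_{A_n}})ψ_{x_n} − h(T_W)ψ‖_{L²[0,1]} → 0. -/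
open MeasureTheory Filter

noncomputable section

/-!
A bounded symmetric kernel defines a symmetric form on `L²` (Fubini), so graphon shift operators,
including those of the induced graphons `W_{A n}`, are self-adjoint. Operator-norm convergence
`T n → T_W` keeps all spectra in one compact interval, and on self-adjoint operators with spectrum
in a fixed compact set `cfc h` is norm-continuous (uniform polynomial approximation of `h`); this
gives (1). Part (2) then follows from the joint continuity of `(S, f) ↦ S f`.
-/

section KernelOperator

variable {α : Type*} [MeasurableSpace α] {μ : Measure α} [IsFiniteMeasure μ] {K : α → α → ℝ}

lemma integrable_kernel_mul_conj_mul (hK : Measurable (Function.uncurry K))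
    (hKbdd : ∃ C, ∀ u v, |K u v| ≤ C) (f g : Lp ℂ 2 μ) :
    Integrable (fun z : α × α => (K z.1 z.2 : ℂ) * starRingEnd ℂ (f z.2) * g z.1)
      (μ.prod μ) := by
  obtain ⟨C, hC⟩ := hKbdd
  have hf : Integrable f μ := (Lp.memLp f).integrable (by norm_num)
  have hg : Integrable g μ := (Lp.memLp g).integrable (by norm_num)
  refine ((hg.norm.mul_prod hf.norm).const_mul C).mono' ?_ (.of_forall fun z => ?_)
  · exact ((Complex.measurable_ofReal.comp hK).aestronglyMeasurable.mul
      (continuous_star.comp_aestronglyMeasurable (Lp.aestronglyMeasurable f).comp_snd)).mul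
      (Lp.aestronglyMeasurable g).comp_fst
  · simp only [norm_mul, Complex.norm_real, Real.norm_eq_abs, RCLike.norm_conj]
    rw [mul_comm ‖g z.1‖, ← mul_assoc]
    gcongr
    exact hC _ _

theorem isSelfAdjoint_of_ae_eq_integral_kernel (hK : Measurable (Function.uncurry K))
    (hKsymm : ∀ u v, K u v = K v u) (hKbdd : ∃ C, ∀ u v, |K u v| ≤ C)
    {T : Lp ℂ 2 μ →L[ℂ] Lp ℂ 2 μ} (hT : ∀ f, ∀ᵐ v ∂μ, T f v = ∫ u, (K v u : ℂ) * f u ∂μ) :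
    IsSelfAdjoint T := by
  refine LinearMap.IsSymmetric.isSelfAdjoint fun f g => ?_
  simp only [ContinuousLinearMap.coe_coe, L2.inner_def, RCLike.inner_apply']
  calc ∫ v, starRingEnd ℂ (T f v) * g v ∂μ
      = ∫ v, ∫ u, (K v u : ℂ) * starRingEnd ℂ (f u) * g v ∂μ ∂μ := by
        refine integral_congr_ae ?_
        filter_upwards [hT f] with v hv
        rw [hv, ← integral_conj, ← integral_mul_const]
        simp [Complex.conj_ofReal]
    _ = ∫ u, ∫ v, (K v u : ℂ) * starRingEnd ℂ (f u) * g v ∂μ ∂μ :=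
        integral_integral_swap (integrable_kernel_mul_conj_mul hK hKbdd f g)
    _ = ∫ u, starRingEnd ℂ (f u) * T g u ∂μ := by
        refine integral_congr_ae ?_
        filter_upwards [hT g] with u hu
        rw [hu, ← integral_const_mul]
        refine integral_congr_ae (.of_forall fun v => ?_)
        simp only [hKsymm v u]
        ring

end KernelOperator

theorem IsGraphon.isSelfAdjoint {W : ℝ → ℝ → ℝ} (hW : IsGraphon W) {T : L2 →L[ℂ] L2}
    (hT : IsGRSO W T) : IsSelfAdjoint T :=
  isSelfAdjoint_of_ae_eq_integral_kernel hW.meas hW.symm hW.bdd hT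

theorem isGraphon_inducedGraphon {n : ℕ} {B : Matrix (Fin n) (Fin n) ℝ} (hB : B.IsSymm) :
    IsGraphon (inducedGraphon B) where
  symm u v := by
    unfold inducedGraphon
    rw [Finset.sum_comm]
    refine Finset.sum_congr rfl fun i _ => Finset.sum_congr rfl fun j _ => ?_
    rw [hB.apply i j]
    ring
  meas := by
    unfold inducedGraphon Function.uncurry
    fun_prop (disch := exact part_meas _ _)
  bdd := by
    refine ⟨∑ i, ∑ j, |B i j|, fun u v => ?_⟩
    have hind (s : Set ℝ) (w : ℝ) : |s.indicator (1 : ℝ → ℝ) w| ≤ 1 := by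
      by_cases hw : w ∈ s <;> simp [hw]
    refine (Finset.abs_sum_le_sum_abs _ _).trans (Finset.sum_le_sum fun i _ => ?_)
    refine (Finset.abs_sum_le_sum_abs _ _).trans (Finset.sum_le_sum fun j _ => ?_)
    rw [abs_mul, abs_mul]
    calc |B i j| * |(part n i).indicator 1 u| * |(part n j).indicator 1 v|
        ≤ |B i j| * 1 * 1 := by gcongr <;> exact hind _ _
      _ = |B i j| := by ring

theorem Filter.Tendsto.cfc_of_isSelfAdjoint {X A : Type*} [NormedRing A] [StarRing A]
    [NormedAlgebra ℝ A] [IsometricContinuousFunctionalCalculus ℝ A IsSelfAdjoint]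
    [ContinuousStar A] [CompleteSpace A] {l : Filter X} {a : X → A} {a₀ : A}
    (ha : Tendsto a l (nhds a₀)) (hsa : ∀ x, IsSelfAdjoint (a x)) (hsa₀ : IsSelfAdjoint a₀)
    {f : ℝ → ℝ} (hf : Continuous f) :
    Tendsto (fun x => cfc f (a x)) l (nhds (cfc f a₀)) := by
  set M := (‖a₀‖ + 1) * ‖(1 : A)‖
  have hspec {b : A} (hb : ‖b‖ ≤ ‖a₀‖ + 1) : spectrum ℝ b ⊆ Metric.closedBall 0 M :=
    (spectrum.subset_closedBall_norm_mul b).trans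
      (Metric.closedBall_subset_closedBall
        (mul_le_mul_of_nonneg_right hb (norm_nonneg _)))
  have hnorm : ∀ᶠ x in l, ‖a x‖ ≤ ‖a₀‖ + 1 :=
    (ha.norm.eventually (gt_mem_nhds (lt_add_one ‖a₀‖))).mono fun _ => le_of_lt
  exact ha.cfc (isCompact_closedBall 0 M) f (hnorm.mono fun _ => hspec)
    (.of_forall hsa) (hspec (by linarith)) hsa₀ hf.continuousOn

/-- If the graphon shift operators induced by symmetric matrices `A n` converge
in operator norm to the graphon shift operator of a graphon `W`, and `h : ℝ → ℝ` is
continuous, then (1) `‖h(T_{W_{A n}}) − h(T_W)‖ → 0`, and (2) for signals `x n` with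
`‖ψ_{x n} − ψ‖ → 0`, also `‖h(T_{W_{A n}})ψ_{x n} − h(T_W)ψ‖ → 0`. -/
theorem statement7 (A : (n : ℕ) → Matrix (Fin n) (Fin n) ℝ) (hA : ∀ n, (A n).IsSymm)
    (W : ℝ → ℝ → ℝ) (hW : IsGraphon W)
    (T : (n : ℕ) → L2 →L[ℂ] L2) (hT : ∀ n, IsGRSO (inducedGraphon (A n)) (T n))
    (TW : L2 →L[ℂ] L2) (hTW : IsGRSO W TW)
    (hconv : Tendsto (fun n => ‖T n - TW‖) atTop (nhds 0))
    (h : ℝ → ℝ) (hh : Continuous h) :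
    Tendsto (fun n => ‖cfc h (T n) - cfc h TW‖) atTop (nhds 0) ∧
    ∀ (x : (n : ℕ) → Fin n → ℂ) (ψ : L2),
      Tendsto (fun n => ‖inducedSignal (x n) - ψ‖) atTop (nhds 0) →
      Tendsto (fun n => ‖cfc h (T n) (inducedSignal (x n)) - cfc h TW ψ‖) atTop (nhds 0) := by
  simp only [← tendsto_iff_norm_sub_tendsto_zero] at hconv ⊢
  have hcfc : Tendsto (fun n => cfc h (T n)) atTop (nhds (cfc h TW)) :=
    hconv.cfc_of_isSelfAdjoint (fun n => (isGraphon_inducedGraphon (hA n)).isSelfAdjoint (hT n))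
      (hW.isSelfAdjoint hTW) hh
  exact ⟨hcfc, fun x ψ hx =>
    (isBoundedBilinearMap_apply.continuous.tendsto _).comp (hcfc.prodMk_nhds hx)⟩
end
end
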